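/- Let 0 < κ < 1, w ≠ 0, μ > 0 and t > 0. Then lim_{ε→0⁺} ∫_ℝ e^{−2μtλ²}·( √(f_{κ,w}(λ√ε)/f_{κ,w}(0)) − 1 )² dλ = 0. (The mean-square convergence at the core of Theorem 3: it expresses E|U_ε(t,x) − U₀(t,x)|² → 0 for the rescaled solutions U_ε(t,x) = ε^{−1/4} u(t/ε, x/√ε) of the heat equation ∂u/∂t = μ ∂²u/∂x² with stationary Gaussian initial condition having spectral density f_{κ,w}.) -/

import Mathlib

open Real MeasureTheory Filter

noncomputable def c1 (k : ℝ) : ℝ := (2:ℝ) ^ ((1 - k)/2) / (Real.sqrt π * Real.Gamma (k/2))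

noncomputable def c2 (k : ℝ) : ℝ := 1 / (2 * Real.Gamma k * Real.cos (k * π / 2))

/-- Modified Bessel function of the second kind:
`K ν z = (1/2) ∫₀^∞ s^(ν−1) exp(−(z/2)(s + 1/s)) ds`. -/
noncomputable def besselK (ν z : ℝ) : ℝ :=
  (1/2) * ∫ s in Set.Ioi (0:ℝ), s ^ (ν - 1) * Real.exp (-(z/2) * (s + 1/s))

/-- The spectral density `f_{κ,w}` of the covariance `cos(wx)/(1+x²)^{κ/2}`. -/
noncomputable def specDen (k w lam : ℝ) : ℝ :=
  (c1 k / 2) * (besselK ((k-1)/2) |lam + w| * |lam + w| ^ ((k-1)/2)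
    + besselK ((k-1)/2) |lam - w| * |lam - w| ^ ((k-1)/2))

/-!
Write `g = (√(f / f 0) - 1) ^ 2`; it is continuous at `0` with `g 0 = 0`, and `g ≤ |f| / f 0 + 1`.
Choose `r > 0` with `g ≤ 1` on `(-r, r)`. The part of the integrand where `|λ√ε| < r` is bounded
by `exp (-a λ²)` and tends to `0` pointwise, so dominated convergence applies. Where `|λ√ε| ≥ r`
and `2bε ≤ a`, one has `exp (-a λ²) ≤ exp (-a r² / (2ε)) · exp (-b (λ√ε)²)`, and substituting
`x = λ√ε` bounds that part by `exp (-a r² / (2ε)) ε^(-1/2) ∫ exp (-b x²) g x`, which tends to `0`.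

For `f = f_{κ,w}` the Gaussian integrability follows from `K_ν z ≤ C z^ν` for `ν = (κ-1)/2 < 0`
(compare the integrand with `s^(ν-1) exp (-z/(2s))` and rescale), which gives
`f_{κ,w} x ≤ C (|x + w|^(κ-1) + |x - w|^(κ-1))`, with integrable singularities since `κ - 1 > -1`.
-/

open Set Topology

lemma integrable_abs_rpow_mul_exp_neg_mul_sq {b s : ℝ} (hb : 0 < b) (hs : -1 < s) :
    Integrable fun x : ℝ => |x| ^ s * exp (-b * x ^ 2) := by
  have hIoi : IntegrableOn (fun x : ℝ => |x| ^ s * exp (-b * x ^ 2)) (Ioi 0) :=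
    (integrableOn_rpow_mul_exp_neg_mul_sq hb hs).congr_fun
      (fun x (hx : 0 < x) => by simp only [abs_of_pos hx]) measurableSet_Ioi
  have hIio : IntegrableOn (fun x : ℝ => |x| ^ s * exp (-b * x ^ 2)) (Iio 0) := by
    refine (IntegrableOn.comp_neg_Iio (c := 0) (by rwa [neg_zero])).congr_fun
      (fun x _ => ?_) measurableSet_Iio
    simp only [abs_neg, neg_sq]
  rw [← integrableOn_univ, ← Iio_union_Ici (a := 0), integrableOn_union,
    integrableOn_Ici_iff_integrableOn_Ioi]
  exact ⟨hIio, hIoi⟩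

lemma integrable_exp_neg_mul_sq_mul_abs_sub_rpow {a p : ℝ} (ha : 0 < a) (hp : -1 < p) (c : ℝ) :
    Integrable fun x : ℝ => exp (-a * x ^ 2) * |x - c| ^ p := by
  have hdom : Integrable fun x : ℝ =>
      exp (a * c ^ 2) * (|x - c| ^ p * exp (-(a / 2) * (x - c) ^ 2)) :=
    ((integrable_abs_rpow_mul_exp_neg_mul_sq (half_pos ha) hp).comp_sub_right c).const_mul _
  refine hdom.mono' (by fun_prop) (Eventually.of_forall fun x => ?_)
  rw [norm_of_nonneg (by positivity), mul_left_comm, ← exp_add, mul_comm]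
  gcongr
  nlinarith [sq_nonneg (x + c)]

lemma tendsto_exp_neg_div_mul_inv_sqrt {c : ℝ} (hc : 0 < c) :
    Tendsto (fun ε => exp (-c / ε) * (√ε)⁻¹) (𝓝[>] 0) (𝓝 0) := by
  refine ((tendsto_rpow_mul_exp_neg_mul_atTop_nhds_zero (1 / 2) c hc).comp
    tendsto_inv_nhdsGT_zero).congr fun ε => ?_
  rw [Function.comp_apply, ← sqrt_eq_rpow, sqrt_inv, neg_mul, ← div_eq_mul_inv, mul_comm, neg_div]

lemma exp_neg_mul_sq_mul_le_min_add {a b r ε lam y : ℝ} (ha : 0 ≤ a) (hε : 0 < ε)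
    (hεb : 2 * b * ε ≤ a) (hy : 0 ≤ y) (hy1 : (lam * √ε) ^ 2 < r ^ 2 → y ≤ 1) :
    exp (-a * lam ^ 2) * y ≤ exp (-a * lam ^ 2) * min y 1 +
      exp (-(a * r ^ 2 / 2) / ε) * (exp (-b * (lam * √ε) ^ 2) * y) := by
  have htail : 0 ≤ exp (-(a * r ^ 2 / 2) / ε) * (exp (-b * (lam * √ε) ^ 2) * y) := by positivity
  rcases lt_or_ge ((lam * √ε) ^ 2) (r ^ 2) with hlt | hge
  · rw [min_eq_left (hy1 hlt)]
    linarith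
  · rw [mul_pow, sq_sqrt hε.le] at hge ⊢
    have h1 : a * r ^ 2 / 2 / ε ≤ a * lam ^ 2 / 2 := by
      rw [div_le_iff₀ hε]
      nlinarith
    have h2 : 2 * (b * (lam ^ 2 * ε)) ≤ a * lam ^ 2 := by
      nlinarith [mul_le_mul_of_nonneg_right hεb (sq_nonneg lam)]
    have hexp : exp (-a * lam ^ 2) ≤ exp (-(a * r ^ 2 / 2) / ε) * exp (-b * (lam ^ 2 * ε)) := by
      rw [← exp_add, exp_le_exp, neg_div]
      linarith
    have hmin : 0 ≤ exp (-a * lam ^ 2) * min y 1 := by positivity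
    nlinarith [mul_le_mul_of_nonneg_right hexp hy]

lemma norm_exp_mul_min_one_le (z : ℝ) {y : ℝ} (hy : 0 ≤ y) : ‖exp z * min y 1‖ ≤ exp z := by
  rw [norm_of_nonneg (mul_nonneg (exp_pos z).le (le_min hy zero_le_one))]
  exact mul_le_of_le_one_right (exp_pos z).le (min_le_right y 1)

lemma tendsto_integral_exp_neg_mul_sq_mul_min_one {a : ℝ} (ha : 0 < a) {g : ℝ → ℝ}
    (hg : Measurable g) (hg0 : ∀ x, 0 ≤ g x) (hlim : Tendsto g (𝓝 0) (𝓝 0)) :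
    Tendsto (fun ε => ∫ lam, exp (-a * lam ^ 2) * min (g (lam * √ε)) 1) (𝓝[>] 0) (𝓝 0) := by
  have hpoint (lam : ℝ) :
      Tendsto (fun ε => exp (-a * lam ^ 2) * min (g (lam * √ε)) 1) (𝓝[>] 0) (𝓝 0) := by
    have hscale : Tendsto (fun ε => lam * √ε) (𝓝[>] 0) (𝓝 0) := by
      simpa using ((continuous_sqrt.tendsto 0).const_mul lam).mono_left nhdsWithin_le_nhds
    have := ((hlim.comp hscale).min (tendsto_const_nhds (x := (1 : ℝ)))).const_mul
      (exp (-a * lam ^ 2))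
    rwa [min_eq_left zero_le_one, mul_zero] at this
  simpa using tendsto_integral_filter_of_dominated_convergence (f := fun _ => 0)
    (fun lam => exp (-a * lam ^ 2)) (Eventually.of_forall fun ε => by fun_prop)
    (Eventually.of_forall fun ε =>
      Eventually.of_forall fun lam => norm_exp_mul_min_one_le _ (hg0 _))
    (integrable_exp_neg_mul_sq ha) (Eventually.of_forall hpoint)

theorem tendsto_integral_exp_neg_mul_sq_mul_comp_mul_sqrt {a b : ℝ} (ha : 0 < a) (hb : 0 < b)
    {g : ℝ → ℝ} (hg : Measurable g) (hg0 : ∀ x, 0 ≤ g x) (hlim : Tendsto g (𝓝 0) (𝓝 0))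
    (hint : Integrable fun x => exp (-b * x ^ 2) * g x) :
    Tendsto (fun ε => ∫ lam, exp (-a * lam ^ 2) * g (lam * √ε)) (𝓝[>] 0) (𝓝 0) := by
  obtain ⟨r, hr, hr1⟩ : ∃ r > 0, ∀ x, x ^ 2 < r ^ 2 → g x ≤ 1 := by
    obtain ⟨r, hr, h⟩ := Metric.eventually_nhds_iff.1 (hlim.eventually (ge_mem_nhds one_pos))
    exact ⟨r, hr, fun x hx => h (by rw [dist_0_eq_abs]; exact abs_lt_of_sq_lt_sq hx hr.le)⟩
  set c := a * r ^ 2 / 2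
  have hbound : ∀ᶠ ε in 𝓝[>] 0, ∫ lam, exp (-a * lam ^ 2) * g (lam * √ε) ≤
      (∫ lam, exp (-a * lam ^ 2) * min (g (lam * √ε)) 1) +
        exp (-c / ε) * (√ε)⁻¹ * ∫ x, exp (-b * x ^ 2) * g x := by
    filter_upwards [Ioo_mem_nhdsGT (show 0 < a / (2 * b) by positivity)] with ε ⟨hε, hεb⟩
    rw [lt_div_iff₀ (by positivity), mul_comm] at hεb
    have hmin : Integrable fun lam => exp (-a * lam ^ 2) * min (g (lam * √ε)) 1 :=
      (integrable_exp_neg_mul_sq ha).mono' (by fun_prop)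
        (Eventually.of_forall fun lam => norm_exp_mul_min_one_le _ (hg0 _))
    have htail : Integrable fun lam => exp (-b * (lam * √ε) ^ 2) * g (lam * √ε) :=
      hint.comp_mul_right' (sqrt_pos.2 hε).ne'
    have hscale : ∫ lam, exp (-b * (lam * √ε) ^ 2) * g (lam * √ε) =
        (√ε)⁻¹ * ∫ x, exp (-b * x ^ 2) * g x := by
      rw [Measure.integral_comp_mul_right (fun x => exp (-b * x ^ 2) * g x), smul_eq_mul,
        abs_of_pos (inv_pos.2 (sqrt_pos.2 hε))]
    calc _ ≤ ∫ lam, (exp (-a * lam ^ 2) * min (g (lam * √ε)) 1 +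
          exp (-c / ε) * (exp (-b * (lam * √ε) ^ 2) * g (lam * √ε))) :=
          integral_mono_of_nonneg
            (Eventually.of_forall fun lam => mul_nonneg (exp_pos _).le (hg0 _))
            (hmin.add (htail.const_mul _))
            (Eventually.of_forall fun lam =>
              exp_neg_mul_sq_mul_le_min_add ha.le hε hεb.le (hg0 _) (hr1 _))
      _ = _ := by
          rw [integral_add hmin (htail.const_mul _), integral_const_mul, hscale, mul_assoc]
  refine squeeze_zero' (Eventually.of_forall fun ε =>
    integral_nonneg fun lam => mul_nonneg (exp_pos _).le (hg0 _)) hbound ?_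
  simpa using (tendsto_integral_exp_neg_mul_sq_mul_min_one ha hg hg0 hlim).add
    ((tendsto_exp_neg_div_mul_inv_sqrt (by positivity : 0 < c)).mul_const _)

lemma sqrt_sub_one_sq_le (x : ℝ) : (√x - 1) ^ 2 ≤ |x| + 1 := by
  rcases le_or_gt 0 x with hx | hx
  · nlinarith [sq_sqrt hx, sqrt_nonneg x, abs_of_nonneg hx]
  · rw [sqrt_eq_zero'.2 hx.le]
    norm_num

theorem tendsto_integral_exp_neg_mul_sq_mul_sqrt_div_sub_one_sq {a b : ℝ} (ha : 0 < a)
    (hb : 0 < b) {f : ℝ → ℝ} (hf : Measurable f) (hf0 : 0 < f 0) (hcont : ContinuousAt f 0)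
    (hint : Integrable fun x => exp (-b * x ^ 2) * f x) :
    Tendsto (fun ε => ∫ lam, exp (-a * lam ^ 2) * (√(f (lam * √ε) / f 0) - 1) ^ 2)
      (𝓝[>] 0) (𝓝 0) := by
  refine tendsto_integral_exp_neg_mul_sq_mul_comp_mul_sqrt ha hb
    (g := fun x => (√(f x / f 0) - 1) ^ 2) (by fun_prop) (fun x => sq_nonneg _) ?_ ?_
  · have : ContinuousAt (fun x => (√(f x / f 0) - 1) ^ 2) 0 :=
      (((hcont.div_const (f 0)).sqrt).sub continuousAt_const).pow 2
    simpa [div_self hf0.ne'] using this.tendsto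
  · refine ((hint.norm.div_const (f 0)).add (integrable_exp_neg_mul_sq hb)).mono' (by fun_prop)
      (Eventually.of_forall fun x => ?_)
    have hsq := mul_le_mul_of_nonneg_left (sqrt_sub_one_sq_le (f x / f 0)) (exp_pos (-b * x ^ 2)).le
    rw [abs_div, abs_of_pos hf0] at hsq
    rw [norm_of_nonneg (by positivity), Pi.add_apply, norm_mul, norm_of_nonneg (exp_pos _).le,
      norm_eq_abs]
    linarith [mul_div_assoc (exp (-b * x ^ 2)) |f x| (f 0)]

lemma integrableOn_rpow_mul_exp_neg_div {ν c : ℝ} (hν : ν < 0) (hc : 0 < c) :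
    IntegrableOn (fun s : ℝ => s ^ (ν - 1) * exp (-(c / s))) (Ioi 0) := by
  have hgamma : IntegrableOn (fun u : ℝ => u ^ (-ν - 1) * exp (-c * u)) (Ioi 0) := by
    simpa using integrableOn_rpow_mul_exp_neg_mul_rpow (p := 1) (by linarith) one_pos hc
  refine ((integrableOn_Ioi_comp_rpow_iff' _ (p := -1) (by norm_num)).2 hgamma).congr_fun
    (fun s (hs : 0 < s) => ?_) measurableSet_Ioi
  simp only [smul_eq_mul]
  rw [rpow_neg_one, inv_rpow hs.le, ← rpow_neg hs.le, ← mul_assoc, ← rpow_add hs,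
    div_eq_mul_inv, neg_mul]
  ring_nf

lemma besselK_integrand_le {ν z s : ℝ} (hz : 0 ≤ z) (hs : 0 < s) :
    s ^ (ν - 1) * exp (-(z / 2) * (s + 1 / s)) ≤ s ^ (ν - 1) * exp (-(z / 2 / s)) := by
  gcongr
  have h : -(z / 2) * (s + 1 / s) = -(z / 2 / s) - z / 2 * s := by ring
  have : 0 ≤ z / 2 * s := by positivity
  linarith

lemma integrableOn_besselK_integrand {ν z : ℝ} (hν : ν < 0) (hz : 0 < z) :
    IntegrableOn (fun s : ℝ => s ^ (ν - 1) * exp (-(z / 2) * (s + 1 / s))) (Ioi 0) := by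
  refine (integrableOn_rpow_mul_exp_neg_div hν (half_pos hz)).mono' (by fun_prop) ?_
  filter_upwards [ae_restrict_mem measurableSet_Ioi] with s (hs : 0 < s)
  rw [norm_of_nonneg (by positivity)]
  exact besselK_integrand_le hz.le hs

lemma besselK_nonneg (ν z : ℝ) : 0 ≤ besselK ν z :=
  mul_nonneg (by norm_num)
    (setIntegral_nonneg measurableSet_Ioi fun s (hs : 0 < s) => by positivity)

lemma besselK_pos {ν z : ℝ} (hν : ν < 0) (hz : 0 < z) : 0 < besselK ν z := by
  refine mul_pos (by norm_num) ?_
  rw [setIntegral_pos_iff_support_of_nonneg_ae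
    (ae_restrict_of_forall_mem measurableSet_Ioi fun s (hs : 0 < s) => by positivity)
    (integrableOn_besselK_integrand hν hz)]
  have hsupp : Ioi (0 : ℝ) ⊆
      Function.support fun s : ℝ => s ^ (ν - 1) * exp (-(z / 2) * (s + 1 / s)) :=
    fun s (hs : 0 < s) => Function.mem_support.2 (by positivity)
  rw [inter_eq_right.2 hsupp, Real.volume_Ioi]
  exact ENNReal.zero_lt_top

lemma integral_rpow_mul_exp_neg_div {ν c : ℝ} (hc : 0 < c) :
    ∫ s in Ioi 0, s ^ (ν - 1) * exp (-(c / s)) =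
      c ^ ν * ∫ s in Ioi 0, s ^ (ν - 1) * exp (-(1 / s)) := by
  have h := integral_comp_mul_left_Ioi (fun s => s ^ (ν - 1) * exp (-(c / s))) 0 hc
  have hscale : ∫ s in Ioi 0, (c * s) ^ (ν - 1) * exp (-(c / (c * s))) =
      c ^ (ν - 1) * ∫ s in Ioi 0, s ^ (ν - 1) * exp (-(1 / s)) := by
    rw [← integral_const_mul]
    refine setIntegral_congr_fun measurableSet_Ioi fun s (hs : 0 < s) => ?_
    rw [mul_rpow hc.le hs.le, div_mul_cancel_left₀ hc.ne', one_div, mul_assoc]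
  rw [mul_zero, smul_eq_mul, hscale, rpow_sub_one hc.ne'] at h
  field_simp at h ⊢
  linarith

lemma exists_besselK_le_mul_rpow {ν : ℝ} (hν : ν < 0) :
    ∃ C, ∀ z > 0, besselK ν z ≤ C * z ^ ν := by
  refine ⟨1 / 2 * (∫ s in Ioi 0, s ^ (ν - 1) * exp (-(1 / s))) / 2 ^ ν, fun z hz => ?_⟩
  have hmono := setIntegral_mono_on (integrableOn_besselK_integrand hν hz)
    (integrableOn_rpow_mul_exp_neg_div hν (half_pos hz)) measurableSet_Ioi
    fun s (hs : 0 < s) => besselK_integrand_le (ν := ν) hz.le hs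
  rw [integral_rpow_mul_exp_neg_div (half_pos hz), div_rpow hz.le zero_le_two] at hmono
  unfold besselK
  calc _ ≤ 1 / 2 * (z ^ ν / 2 ^ ν * ∫ s in Ioi 0, s ^ (ν - 1) * exp (-(1 / s))) := by gcongr
    _ = _ := by ring

lemma measurable_besselK (ν : ℝ) : Measurable (besselK ν) :=
  ((StronglyMeasurable.integral_prod_right' (f := fun p : ℝ × ℝ =>
    p.2 ^ (ν - 1) * exp (-(p.1 / 2) * (p.2 + 1 / p.2))) (by fun_prop)).measurable).const_mul _

lemma continuousAt_besselK {ν z : ℝ} (hν : ν < 0) (hz : 0 < z) : ContinuousAt (besselK ν) z := by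
  refine continuousAt_const.mul (continuousAt_of_dominated
    (bound := fun s => s ^ (ν - 1) * exp (-(z / 2 / 2) * (s + 1 / s)))
    (Eventually.of_forall fun _ => by fun_prop) ?_
    (integrableOn_besselK_integrand hν (half_pos hz))
    (ae_of_all _ fun s => by fun_prop))
  filter_upwards [Ioi_mem_nhds (half_lt_self hz)] with y (hy : z / 2 < y)
  filter_upwards [ae_restrict_mem measurableSet_Ioi] with s (hs : 0 < s)
  rw [norm_of_nonneg (by positivity)]
  refine mul_le_mul_of_nonneg_left (exp_le_exp.2 ?_) (by positivity)
  have : 0 < s + 1 / s := by positivity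
  nlinarith

lemma continuousAt_besselK_mul_rpow {ν z : ℝ} (hν : ν < 0) (hz : 0 < z) :
    ContinuousAt (fun z => besselK ν z * z ^ ν) z :=
  (continuousAt_besselK hν hz).mul (continuousAt_rpow_const _ _ (Or.inl hz.ne'))

lemma exists_besselK_mul_rpow_le {ν : ℝ} (hν : ν < 0) :
    ∃ C, ∀ z ≥ 0, besselK ν z * z ^ ν ≤ C * z ^ (2 * ν) := by
  obtain ⟨C, hC⟩ := exists_besselK_le_mul_rpow hν
  refine ⟨C, fun z hz => ?_⟩
  rcases hz.eq_or_lt with rfl | hz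
  · simp [zero_rpow hν.ne, hν.ne]
  · calc besselK ν z * z ^ ν ≤ C * z ^ ν * z ^ ν := by gcongr; exact hC z hz
      _ = C * z ^ (2 * ν) := by rw [two_mul, rpow_add hz, mul_assoc]

lemma c1_pos {k : ℝ} (hk : 0 < k) : 0 < c1 k := by
  unfold c1
  have := Gamma_pos_of_pos (half_pos hk)
  positivity

lemma measurable_specDen (k w : ℝ) : Measurable (specDen k w) := by
  unfold specDen
  have := measurable_besselK ((k - 1) / 2)
  fun_prop

lemma specDen_nonneg {k : ℝ} (hk : 0 < k) (w lam : ℝ) : 0 ≤ specDen k w lam := by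
  unfold specDen
  have := c1_pos hk
  have := besselK_nonneg ((k - 1) / 2) |lam + w|
  have := besselK_nonneg ((k - 1) / 2) |lam - w|
  positivity

lemma specDen_zero_pos {k w : ℝ} (hk0 : 0 < k) (hk1 : k < 1) (hw : w ≠ 0) :
    0 < specDen k w 0 := by
  unfold specDen
  rw [zero_add, zero_sub, abs_neg]
  have := c1_pos hk0
  have := besselK_pos (by linarith : (k - 1) / 2 < 0) (abs_pos.2 hw)
  positivity

lemma continuousAt_specDen {k w lam : ℝ} (hk : k < 1) (hplus : lam + w ≠ 0)
    (hminus : lam - w ≠ 0) : ContinuousAt (specDen k w) lam := by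
  have hν : (k - 1) / 2 < 0 := by linarith
  have hB {y : ℝ} (hy : y ≠ 0) :=
    continuousAt_besselK_mul_rpow (z := |y|) hν (abs_pos.2 hy)
  exact continuousAt_const.mul
    (((hB hplus).comp (f := fun x => |x + w|) (by fun_prop)).add
      ((hB hminus).comp (f := fun x => |x - w|) (by fun_prop)))

lemma integrable_exp_neg_mul_sq_mul_specDen {k b : ℝ} (hk0 : 0 < k) (hk1 : k < 1) (hb : 0 < b)
    (w : ℝ) : Integrable fun x => exp (-b * x ^ 2) * specDen k w x := by
  obtain ⟨C, hC⟩ := exists_besselK_mul_rpow_le (by linarith : (k - 1) / 2 < 0)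
  have hp : -1 < k - 1 := by linarith
  have hdom := ((integrable_exp_neg_mul_sq_mul_abs_sub_rpow hb hp (-w)).add
    (integrable_exp_neg_mul_sq_mul_abs_sub_rpow hb hp w)).const_mul (c1 k / 2 * C)
  refine hdom.mono' (by have := measurable_specDen k w; fun_prop)
    (Eventually.of_forall fun x => ?_)
  rw [norm_of_nonneg (mul_nonneg (exp_pos _).le (specDen_nonneg hk0 w x)), Pi.add_apply,
    sub_neg_eq_add]
  have h2 : 2 * ((k - 1) / 2) = k - 1 := by ring
  have hplus := hC _ (abs_nonneg (x + w))
  have hminus := hC _ (abs_nonneg (x - w))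
  rw [h2] at hplus hminus
  unfold specDen
  have := c1_pos hk0
  have := exp_pos (-b * x ^ 2)
  calc _ ≤ exp (-b * x ^ 2) * (c1 k / 2 * (C * |x + w| ^ (k - 1) + C * |x - w| ^ (k - 1))) := by
        gcongr
    _ = _ := by ring

theorem heat_mean_square_convergence (k w μ t : ℝ)
    (hk0 : 0 < k) (hk1 : k < 1) (hw : w ≠ 0) (hμ : 0 < μ) (ht : 0 < t) :
    Filter.Tendsto
      (fun ε : ℝ => ∫ lam : ℝ, Real.exp (-2*μ*t*lam^2) *
        (Real.sqrt (specDen k w (lam * Real.sqrt ε) / specDen k w 0) - 1)^2)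
      (nhdsWithin 0 (Set.Ioi 0)) (nhds 0) := by
  have h := tendsto_integral_exp_neg_mul_sq_mul_sqrt_div_sub_one_sq
    (by positivity : 0 < 2 * μ * t) one_pos (measurable_specDen k w)
    (specDen_zero_pos hk0 hk1 hw) (continuousAt_specDen hk1 (by simpa) (by simpa))
    (integrable_exp_neg_mul_sq_mul_specDen hk0 hk1 one_pos w)
  simpa only [neg_mul] using h
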